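/- Let D be a digraph, v a vertex of D, X = {x1,...,xk} a set of k distinct out-neighbours of v, and Y = {y1,...,yk} a set of k distinct in-neighbours of v (X and Y may intersect). Suppose in D - v there are k pairwise disjoint dipaths P1,...,Pk from X to Y, and there is a dipath from a vertex of some Pi to a vertex of a different Pj whose internal vertices avoid {v} ∪ P1 ∪ ... ∪ Pk. Then D contains a subdivision of the superstar SS*_k with centre v. -/

import Mathlib

open List

variable {V : Type*}

/-- The interior (internal vertices) of a path given as a list of vertices. -/
def interiorL (l : List V) : List V := l.tail.dropLast

/-- `l` is a directed path (dipath) in the digraph `D`. -/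
def IsDipath (D : V → V → Prop) (l : List V) : Prop :=
  l ≠ [] ∧ l.Chain' D ∧ l.Nodup

/-- `l` is a dipath from `x` to `y` in `D`. -/
def DipathFromTo (D : V → V → Prop) (l : List V) (x y : V) : Prop :=
  IsDipath D l ∧ l.head? = some x ∧ l.getLast? = some y

/-- `l` is a directed cycle in `D` (length at least 2, digraphs being strict). -/
def IsDicycle (D : V → V → Prop) (l : List V) : Prop :=
  2 ≤ l.length ∧ l.Nodup ∧ l.Chain' D ∧ ∃ a ∈ l.getLast?, ∃ b ∈ l.head?, D a b

/-- The restriction (induced subdigraph) of `D` to the vertex set `A`. -/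
def restrict (D : V → V → Prop) (A : Set V) : V → V → Prop :=
  fun u v => D u v ∧ u ∈ A ∧ v ∈ A

/-- Reachability by a dipath inside the vertex set `A`. -/
def ReachIn (D : V → V → Prop) (A : Set V) : V → V → Prop :=
  Relation.ReflTransGen (restrict D A)

/-- Reachability by a dipath. -/
def Reach (D : V → V → Prop) : V → V → Prop := Relation.ReflTransGen D

/-- `x` appears strictly before `y` along the list `l`. -/
def Before (l : List V) (x y : V) : Prop :=
  ∃ i j : ℕ, i < j ∧ l[i]? = some x ∧ l[j]? = some y

/-- `x` and `y` are consecutive (in this order) in `l`. -/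
def ConsecIn (l : List V) (x y : V) : Prop :=
  ∃ i : ℕ, l[i]? = some x ∧ l[i + 1]? = some y

/-- `D` contains a subdivision of `F`, realized by the branch-vertex map `branch` and,
for every arc `uv` of `F`, the dipath `P u v` from `branch u` to `branch v`;
the paths have length at least one and are internally disjoint from each other
and from the branch vertices. -/
def IsSubdivisionIn {W : Type*} (F : W → W → Prop) (D : V → V → Prop)
    (branch : W → V) (P : W → W → List V) : Prop :=
  Function.Injective branch ∧
  (∀ u v : W, F u v →
    DipathFromTo D (P u v) (branch u) (branch v) ∧ 2 ≤ (P u v).length) ∧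
  (∀ u v : W, F u v → ∀ x ∈ interiorL (P u v), ∀ w : W, x ≠ branch w) ∧
  (∀ u v u' v' : W, F u v → F u' v' → (u, v) ≠ (u', v') →
    ∀ x ∈ interiorL (P u v), x ∉ interiorL (P u' v'))

/-- `D` contains a subdivision of `F`. -/
def ContainsSubdivision {W : Type*} (F : W → W → Prop) (D : V → V → Prop) : Prop :=
  ∃ (branch : W → V) (P : W → W → List V), IsSubdivisionIn F D branch P

/-- The superstar `SS*ₖ` on `Fin (k+1)` with centre `0`: directed 2-cycles between the
centre and every leaf, plus the arc from leaf `1` to leaf `2`. -/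
def SSstar (k : ℕ) : Fin (k + 1) → Fin (k + 1) → Prop :=
  fun u v => (u = 0 ∧ v ≠ 0) ∨ (v = 0 ∧ u ≠ 0) ∨ (u = 1 ∧ v = 2)

/-! Closing each linkage path `P m` with the arcs `v → x m` and `y (σ m) → v` gives `k` dicycles
through `v` that meet only in `v`. Cut each of them at a vertex `c m`, taking for `c i` and `c j` the
ends of `R`: the two halves are the spokes `v → c m` and `c m → v` of the superstar, and `R` is the
arc between the leaves `c i` and `c j`. -/

section Dipaths

variable {D : V → V → Prop}

theorem DipathFromTo.mono {D' : V → V → Prop} (hDD' : ∀ a b, D a b → D' a b) {l : List V}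
    {x y : V} (h : DipathFromTo D l x y) : DipathFromTo D' l x y :=
  ⟨⟨h.1.1, h.1.2.1.imp hDD', h.1.2.2⟩, h.2⟩

theorem DipathFromTo.mem_of_restrict {A : Set V} {l : List V} {x y : V}
    (h : DipathFromTo (restrict D A) l x y) (hx : x ∈ A) : ∀ z ∈ l, z ∈ A :=
  h.1.2.1.induction (· ∈ A) l (fun _ _ hab _ => hab.2.2) fun hne =>
    Option.some.inj ((head?_eq_some_head hne).symm.trans h.2.1) ▸ hx

theorem isDicycle_cons {l : List V} {v x y : V} (hl : DipathFromTo D l x y) (hv : v ∉ l)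
    (hvx : D v x) (hyv : D y v) : IsDicycle D (v :: l) := by
  obtain ⟨⟨hne, hchain, hnodup⟩, hx, hy⟩ := hl
  obtain ⟨z, l', rfl⟩ := exists_cons_of_ne_nil hne
  refine ⟨by simp, nodup_cons.2 ⟨hv, hnodup⟩, isChain_cons.2 ⟨?_, hchain⟩, y, ?_, v, rfl, hyv⟩
  · simpa [hx] using hvx
  · rw [getLast?_cons_cons, hy]; rfl

theorem interiorL_cons_append_singleton (a b : V) (l : List V) :
    interiorL (a :: (l ++ [b])) = l := by
  simp [interiorL]

theorem List.Nodup.notMem_and_disjoint_of_middle {s t : List V} {c : V}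
    (h : (s ++ c :: t).Nodup) : c ∉ s ∧ c ∉ t ∧ Disjoint s t := by
  have h' := nodup_middle.1 h
  rw [nodup_cons, mem_append, not_or] at h'
  exact ⟨h'.1.1, h'.1.2, h'.2.disjoint⟩

theorem IsDicycle.dipathFromTo_head_to {v c : V} {s t : List V}
    (h : IsDicycle D (v :: (s ++ c :: t))) : DipathFromTo D (v :: (s ++ [c])) v c := by
  have hpre : v :: (s ++ [c]) <+: v :: (s ++ c :: t) := ⟨t, by simp⟩
  exact ⟨⟨by simp, h.2.2.1.prefix hpre, h.2.1.sublist hpre.sublist⟩, rfl,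
    by rw [← cons_append, getLast?_concat]⟩

theorem IsDicycle.dipathFromTo_to_head {v c : V} {s t : List V}
    (h : IsDicycle D (v :: (s ++ c :: t))) : DipathFromTo D (c :: (t ++ [v])) c v := by
  obtain ⟨-, hnodup, hchain, a, ha, b, ⟨⟩, hav⟩ := h
  have hsuf : c :: t <:+ v :: (s ++ c :: t) := ⟨v :: s, rfl⟩
  have hlast : (c :: t).getLast? = some a := by
    rw [← ha, ← cons_append, getLast?_append_of_ne_nil _ (cons_ne_nil c t)]
  refine ⟨⟨by simp, ?_, ?_⟩, rfl, by rw [← cons_append, getLast?_concat]⟩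
  · show (c :: t ++ [v]).IsChain D
    refine isChain_append.2 ⟨hchain.suffix hsuf, isChain_singleton v, ?_⟩
    rw [hlast]
    rintro _ ⟨⟩ _ ⟨⟩
    exact hav
  · rw [← cons_append]
    exact ((perm_append_singleton v _).nodup_iff).2 <|
      hnodup.sublist ((sublist_append_right s (c :: t)).cons_cons v)

end Dipaths

theorem SSstar.arc_cases {k : ℕ} (hk : 2 ≤ k) {u w : Fin (k + 1)} (h : SSstar k u w) :
    (u = 0 ∧ ∃ m : Fin k, w = m.succ) ∨ (∃ m : Fin k, u = m.succ ∧ w = 0) ∨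
      (u = Fin.succ ⟨0, by omega⟩ ∧ w = Fin.succ ⟨1, hk⟩) := by
  rcases h with ⟨rfl, hw⟩ | ⟨rfl, hu⟩ | ⟨rfl, rfl⟩
  · exact .inl ⟨rfl, Fin.exists_succ_eq.2 hw |>.imp fun _ h => h.symm⟩
  · exact .inr <| .inl <| (Fin.exists_succ_eq.2 hu).imp fun _ h => ⟨h.symm, rfl⟩
  · refine .inr <| .inr ⟨?_, ?_⟩ <;> ext <;> simp <;> omega

theorem exists_perm_apply_eq_apply_eq {α : Type*} [DecidableEq α] {a b i j : α} (hab : a ≠ b)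
    (hij : i ≠ j) : ∃ e : Equiv.Perm α, e a = i ∧ e b = j := by
  have hj : Equiv.swap a i j ≠ a := by
    rw [Ne, Equiv.swap_apply_eq_iff, Equiv.swap_apply_left]
    exact hij.symm
  refine ⟨(Equiv.swap b (Equiv.swap a i j)).trans (Equiv.swap a i), ?_, ?_⟩
  · simp [Equiv.swap_apply_of_ne_of_ne hab hj.symm]
  · simp

theorem exists_choice_apply_eq_apply_eq {ι α : Type*} [DecidableEq ι] {p : ι → α → Prop}
    (hp : ∀ m, ∃ z, p m z) {i j : ι} (hij : i ≠ j) {a b : α} (ha : p i a) (hb : p j b) :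
    ∃ c : ι → α, (∀ m, p m (c m)) ∧ c i = a ∧ c j = b := by
  choose f hf using hp
  refine ⟨Function.update (Function.update f j b) i a, fun m => ?_, by simp, by simp [hij.symm]⟩
  rcases eq_or_ne m i with rfl | hmi
  · simpa using ha
  rcases eq_or_ne m j with rfl | hmj
  · simpa [hmi] using hb
  · simpa [hmi, hmj] using hf m

theorem exists_superstar_of_dicycles {D : V → V → Prop} {k : ℕ} (hk : 2 ≤ k) {v : V}
    {C : Fin k → List V} (hC : ∀ m, IsDicycle D (v :: C m))
    (hCdisj : ∀ m m', m ≠ m' → ∀ z ∈ C m, z ∉ C m') {c : Fin k → V} (hc : ∀ m, c m ∈ C m)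
    {R : List V} (hR : DipathFromTo D R (c ⟨0, by omega⟩) (c ⟨1, hk⟩)) (hRlen : 2 ≤ R.length)
    (hRint : ∀ z ∈ interiorL R, z ≠ v ∧ ∀ m, z ∉ C m) :
    ∃ Q, IsSubdivisionIn (SSstar k) D (Fin.cons v c) Q := by
  choose s t hst using fun m => append_of_mem (hc m)
  have hCyc : ∀ m, IsDicycle D (v :: (s m ++ c m :: t m)) := fun m => hst m ▸ hC m
  have hsame : ∀ m m', ∀ z ∈ C m, z ∈ C m' → m = m' := fun m m' z hz hz' =>
    by_contra fun h => hCdisj m m' h z hz hz'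
  have hvC : ∀ m, v ∉ C m := fun m => (nodup_cons.1 (hC m).2.1).1
  have hsplit : ∀ m, c m ∉ s m ∧ c m ∉ t m ∧ Disjoint (s m) (t m) := fun m =>
    (hst m ▸ (nodup_cons.1 (hC m).2.1).2 : (s m ++ c m :: t m).Nodup).notMem_and_disjoint_of_middle
  have hsC : ∀ m, ∀ z ∈ s m, z ∈ C m := fun m z hz => by simp [hst m, hz]
  have htC : ∀ m, ∀ z ∈ t m, z ∈ C m := fun m z hz => by simp [hst m, hz]
  have hbranch : ∀ m, ∀ z ∈ C m, z ≠ c m → ∀ w, z ≠ Fin.cons (α := fun _ => V) v c w := by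
    intro m z hz hzc w
    refine Fin.cases ?_ (fun m' => ?_) w <;> rintro rfl
    · exact hvC m hz
    · simp only [Fin.cons_succ] at hz hzc
      exact hzc (congrArg c (hsame m' m _ (hc m') hz))
  refine ⟨Fin.cons (Fin.cons [] fun m => v :: (s m ++ [c m]))
    fun m => Fin.cons (c m :: (t m ++ [v])) fun _ => R, ?_, ?_, ?_, ?_⟩
  · exact Fin.cons_injective_iff.2 ⟨fun ⟨m, h⟩ => hvC m (h ▸ hc m),
      fun m m' h => hsame m m' (c m) (hc m) (h ▸ hc m')⟩
  · intro u w huw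
    rcases SSstar.arc_cases hk huw with ⟨rfl, m, rfl⟩ | ⟨m, rfl, rfl⟩ | ⟨rfl, rfl⟩
    · simpa using (hCyc m).dipathFromTo_head_to
    · simpa using (hCyc m).dipathFromTo_to_head
    · simpa using ⟨hR, hRlen⟩
  · intro u w huw z hz
    rcases SSstar.arc_cases hk huw with ⟨rfl, m, rfl⟩ | ⟨m, rfl, rfl⟩ | ⟨rfl, rfl⟩
    · simp only [Fin.cons_zero, Fin.cons_succ, interiorL_cons_append_singleton] at hz
      exact hbranch m z (hsC m z hz) fun h => (hsplit m).1 (h ▸ hz)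
    · simp only [Fin.cons_zero, Fin.cons_succ, interiorL_cons_append_singleton] at hz
      exact hbranch m z (htC m z hz) fun h => (hsplit m).2.1 (h ▸ hz)
    · simp only [Fin.cons_succ] at hz
      refine Fin.cases (hRint z hz).1 fun m h => (hRint z hz).2 m ?_
      simpa [h] using hc m
  · intro u w u' w' huw huw' hne z hz hz'
    rcases SSstar.arc_cases hk huw with ⟨rfl, m, rfl⟩ | ⟨m, rfl, rfl⟩ | ⟨rfl, rfl⟩ <;>
    rcases SSstar.arc_cases hk huw' with ⟨rfl, m', rfl⟩ | ⟨m', rfl, rfl⟩ | ⟨rfl, rfl⟩ <;>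
    simp only [Fin.cons_zero, Fin.cons_succ, interiorL_cons_append_singleton] at hz hz'
    · exact hne (by rw [hsame m m' z (hsC m z hz) (hsC m' z hz')])
    · obtain rfl := hsame m m' z (hsC m z hz) (htC m' z hz')
      exact (hsplit m).2.2 hz hz'
    · exact (hRint z hz').2 m (hsC m z hz)
    · obtain rfl := hsame m m' z (htC m z hz) (hsC m' z hz')
      exact (hsplit m).2.2 hz' hz
    · exact hne (by rw [hsame m m' z (htC m z hz) (htC m' z hz')])
    · exact (hRint z hz').2 m (htC m z hz)
    · exact (hRint z hz).2 m' (hsC m' z hz')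
    · exact (hRint z hz).2 m' (htC m' z hz')
    · exact hne rfl

theorem superstar_of_linkage_general (D : V → V → Prop) (k : ℕ) (hk : 2 ≤ k) (v : V)
    (x y : Fin k → V)
    (hxout : ∀ i, D v (x i)) (hyin : ∀ i, D (y i) v)
    (hxv : ∀ i, x i ≠ v)
    (P : Fin k → List V) (σ : Equiv.Perm (Fin k))
    (hP : ∀ i, DipathFromTo (restrict D {z | z ≠ v}) (P i) (x i) (y (σ i)))
    (hPdisj : ∀ i j, i ≠ j → ∀ z, z ∈ P i → z ∉ P j)
    (R : List V) (i j : Fin k) (hij : i ≠ j)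
    (hR : IsDipath D R) (hRlen : 2 ≤ R.length)
    (hRhead : ∀ a ∈ R.head?, a ∈ P i) (hRlast : ∀ a ∈ R.getLast?, a ∈ P j)
    (hRint : ∀ z ∈ interiorL R, z ≠ v ∧ ∀ l, z ∉ P l) :
    ∃ branch Q, IsSubdivisionIn (SSstar k) D branch Q ∧ branch 0 = v := by
  have hcycle : ∀ m, IsDicycle D (v :: P m) := fun m =>
    isDicycle_cons ((hP m).mono fun _ _ h => h.1)
      (fun hv => (hP m).mem_of_restrict (hxv m) v hv rfl) (hxout m) (hyin (σ m))
  obtain ⟨c, hc, hci, hcj⟩ := exists_choice_apply_eq_apply_eq (p := fun m z => z ∈ P m)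
    (fun m => ⟨x m, mem_of_mem_head? (hP m).2.1⟩) hij
    (hRhead _ (head?_eq_some_head hR.1)) (hRlast _ (getLast?_eq_some_getLast hR.1))
  obtain ⟨e, he0, he1⟩ := exists_perm_apply_eq_apply_eq (α := Fin k) (a := ⟨0, by omega⟩)
    (b := ⟨1, hk⟩) (by simp) hij
  obtain ⟨Q, hQ⟩ := exists_superstar_of_dicycles hk (C := P ∘ e) (fun m => hcycle (e m))
    (fun m m' h => hPdisj _ _ (e.injective.ne h)) (c := c ∘ e) (fun m => hc (e m))
    ⟨hR, by simp [he0, hci, head?_eq_some_head hR.1],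
      by simp [he1, hcj, getLast?_eq_some_getLast hR.1]⟩
    hRlen fun z hz => ⟨(hRint z hz).1, fun m => (hRint z hz).2 (e m)⟩
  exact ⟨_, Q, hQ, rfl⟩

/-- sufficiency of the disjoint linkage plus a connecting path for a
superstar subdivision with centre `v`. -/
theorem superstar_of_linkage (D : V → V → Prop) (k : ℕ) (hk : 2 ≤ k) (v : V)
    (x y : Fin k → V)
    (hxinj : Function.Injective x) (hyinj : Function.Injective y)
    (hxout : ∀ i, D v (x i)) (hyin : ∀ i, D (y i) v)
    (hxv : ∀ i, x i ≠ v) (hyv : ∀ i, y i ≠ v)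
    (P : Fin k → List V) (σ : Equiv.Perm (Fin k))
    (hP : ∀ i, DipathFromTo (restrict D {z | z ≠ v}) (P i) (x i) (y (σ i)))
    (hPdisj : ∀ i j, i ≠ j → ∀ z, z ∈ P i → z ∉ P j)
    (R : List V) (i j : Fin k) (hij : i ≠ j)
    (hR : IsDipath D R) (hRlen : 2 ≤ R.length)
    (hRhead : ∀ a ∈ R.head?, a ∈ P i) (hRlast : ∀ a ∈ R.getLast?, a ∈ P j)
    (hRint : ∀ z ∈ interiorL R, z ≠ v ∧ ∀ l, z ∉ P l) :
    ∃ branch Q, IsSubdivisionIn (SSstar k) D branch Q ∧ branch 0 = v :=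
  superstar_of_linkage_general D k hk v x y hxout hyin hxv P σ hP hPdisj R i j hij hR hRlen hRhead
    hRlast hRint
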